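/- Define f : ℝ → ℝ by f(t) = ∫₀ᵗ √(cosh s) ds. Let B, C, E, F, B′, C′, E′, F′ ∈ ℝ satisfy B E′ + C F′ = B′ E + C′ F. Define w₁(t) = tanh t, w₂(t) = w₃(t) = sech t, p₁(t) = B(f(t) tanh t − 2√(cosh t)) + i E/√(cosh t), p₂(t) = B f(t) sech t + C √(cosh t) + i E sinh t/(2√(cosh t)) + i F/√(cosh t), p₃(t) = B f(t) sech t − C √(cosh t) + i E sinh t/(2√(cosh t)) − i F/√(cosh t), and q₁, q₂, q₃ by the same formulas with B′, C′, E′, F′ in place of B, C, E, F. Let r₁, r₂, r₃ : ℝ → ℂ be the unique differentiable functions with r_j(0) = 0 satisfying dr₁/dt = ½(conj(p₂)conj(p₃) + conj(q₃)conj(q₂)), dr₂/dt = ½(conj(q₃)conj(q₁) − conj(p₁)conj(p₃)), dr₃/dt = −½(conj(p₁)conj(q₂) + conj(p₂)conj(q₁)). Define Φ : ℝ³ → ℂ³ by Φ(y₁,y₂,t) = (½(y₁²+y₂²)w₁(t) + y₁p₁(t) + y₂q₁(t) + r₁(t), ½(y₁²−y₂²)w₂(t) + y₁p₂(t) − y₂q₂(t)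 + r₂(t), y₁y₂w₃(t) + y₁q₃(t) + y₂p₃(t) + r₃(t)). Then at every point of ℝ³, ω vanishes on each pair of partial derivatives of Φ and Im Ω(∂Φ/∂y₁, ∂Φ/∂y₂, ∂Φ/∂t) = 0; that is, N = Φ(ℝ³) is a special Lagrangian 3-fold in ℂ³ wherever it is nonsingular. -/

import Mathlib

noncomputable section

open Complex ComplexConjugate

/-- ℂ³ as triples of complex numbers. -/
abbrev C3 := ℂ × ℂ × ℂ

/-- The standard Kähler form ω(u,v) = Σ Im(conj(u_j)·v_j). -/
def omega3 (u v : C3) : ℝ :=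
  (conj u.1 * v.1).im + (conj u.2.1 * v.2.1).im + (conj u.2.2 * v.2.2).im

/-- The holomorphic volume form Ω(u,v,w): determinant of the matrix with columns u,v,w. -/
def Omega3 (u v w : C3) : ℂ :=
  u.1 * (v.2.1 * w.2.2 - v.2.2 * w.2.1)
  - v.1 * (u.2.1 * w.2.2 - u.2.2 * w.2.1)
  + w.1 * (u.2.1 * v.2.2 - u.2.2 * v.2.1)

/-- f(t) = ∫₀ᵗ √(cosh s) ds. -/
def fInt (t : ℝ) : ℝ := ∫ s in (0:ℝ)..t, Real.sqrt (Real.cosh s)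

/-- p₁(t) = B(f(t) tanh t − 2√(cosh t)) + iE/√(cosh t). -/
def sol1 (B E : ℝ) (t : ℝ) : ℂ :=
  ((B * (fInt t * Real.tanh t - 2 * Real.sqrt (Real.cosh t)) : ℝ) : ℂ)
  + Complex.I * ((E / Real.sqrt (Real.cosh t) : ℝ) : ℂ)

/-- p₂(t) = B f(t) sech t + C√(cosh t) + iE sinh t/(2√(cosh t)) + iF/√(cosh t). -/
def sol2 (B C E F : ℝ) (t : ℝ) : ℂ :=
  ((B * fInt t / Real.cosh t + C * Real.sqrt (Real.cosh t) : ℝ) : ℂ)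
  + Complex.I * ((E * Real.sinh t / (2 * Real.sqrt (Real.cosh t))
      + F / Real.sqrt (Real.cosh t) : ℝ) : ℂ)

/-- p₃(t) = B f(t) sech t − C√(cosh t) + iE sinh t/(2√(cosh t)) − iF/√(cosh t). -/
def sol3 (B C E F : ℝ) (t : ℝ) : ℂ :=
  ((B * fInt t / Real.cosh t - C * Real.sqrt (Real.cosh t) : ℝ) : ℂ)
  + Complex.I * ((E * Real.sinh t / (2 * Real.sqrt (Real.cosh t))
      - F / Real.sqrt (Real.cosh t) : ℝ) : ℂ)

/-! Writing `Φ_{y₁}, Φ_{y₂}` for the partial derivatives, the coefficients `w = (tanh, sech, sech)`,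
`p`, `q`, `r` satisfy the evolution equations for quadrics, which say exactly that
`Φ_t = ½ · conj (Φ_{y₁} × Φ_{y₂})`. Such a vector is `ω`-orthogonal to `Φ_{y₁}` and `Φ_{y₂}`, and
`Ω (Φ_{y₁}, Φ_{y₂}, ½ · conj (Φ_{y₁} × Φ_{y₂})) = ½ |Φ_{y₁} × Φ_{y₂}|²` is real. What remains is
`ω (Φ_{y₁}, Φ_{y₂}) = 0`: it is affine in `(y₁, y₂)`, its linear part vanishes for these coefficients
and its constant part is a multiple of `B E' + C F' - B' E - C' F`. -/

def conjCross (u v : C3) : C3 :=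
  (conj (u.2.1 * v.2.2 - u.2.2 * v.2.1), conj (u.2.2 * v.1 - u.1 * v.2.2),
    conj (u.1 * v.2.1 - u.2.1 * v.1))

theorem omega3_smul_conjCross_left (c : ℝ) (u v : C3) : omega3 u (c • conjCross u v) = 0 := by
  simp only [omega3, conjCross, Prod.smul_mk, Complex.real_smul, Complex.mul_im, Complex.mul_re,
    Complex.conj_re, Complex.conj_im, Complex.sub_re, Complex.sub_im, Complex.ofReal_re,
    Complex.ofReal_im]
  ring

theorem omega3_smul_conjCross_right (c : ℝ) (u v : C3) : omega3 v (c • conjCross u v) = 0 := by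
  simp only [omega3, conjCross, Prod.smul_mk, Complex.real_smul, Complex.mul_im, Complex.mul_re,
    Complex.conj_re, Complex.conj_im, Complex.sub_re, Complex.sub_im, Complex.ofReal_re,
    Complex.ofReal_im]
  ring

theorem im_Omega3_smul_conjCross (c : ℝ) (u v : C3) :
    (Omega3 u v (c • conjCross u v)).im = 0 := by
  simp only [Omega3, conjCross, Prod.smul_mk, Complex.real_smul, Complex.mul_im, Complex.mul_re,
    Complex.conj_re, Complex.conj_im, Complex.sub_re, Complex.sub_im, Complex.add_im,
    Complex.ofReal_re, Complex.ofReal_im]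
  ring

section Calculus

variable {𝕜 E F : Type*} [NontriviallyNormedField 𝕜] [NormedAddCommGroup E] [NormedSpace 𝕜 E]
  [NormedAddCommGroup F] [NormedSpace 𝕜 F] {f : 𝕜 → E × F} {f' : E × F} {x : 𝕜}

theorem HasDerivAt.prod_fst (hf : HasDerivAt f f' x) : HasDerivAt (fun s => (f s).1) f'.1 x :=
  (ContinuousLinearMap.fst 𝕜 E F).hasFDerivAt.comp_hasDerivAt x hf

theorem HasDerivAt.prod_snd (hf : HasDerivAt f f' x) : HasDerivAt (fun s => (f s).2) f'.2 x :=
  (ContinuousLinearMap.snd 𝕜 E F).hasFDerivAt.comp_hasDerivAt x hf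

end Calculus

theorem hasDerivAt_of_eq_quadratic {f : ℝ → ℂ} {f' : ℂ} {x : ℝ} (a b c : ℂ)
    (hf : ∀ s : ℝ, f s = a * s ^ 2 + b * s + c) (hf' : 2 * a * x + b = f') :
    HasDerivAt f f' x := by
  have hs := (hasDerivAt_id x).ofReal_comp
  rw [funext hf, ← hf']
  exact (((hs.pow 2).const_mul a).add (hs.const_mul b)).add_const c |>.congr_deriv (by simp; ring)

theorem HasDerivAt.ofReal_add_I_mul_ofReal {a b : ℝ → ℝ} {a' b' t : ℝ} (ha : HasDerivAt a a' t)
    (hb : HasDerivAt b b' t) :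
    HasDerivAt (fun s => (a s : ℂ) + I * (b s : ℂ)) ((a' : ℂ) + I * (b' : ℂ)) t :=
  ha.ofReal_comp.add (hb.ofReal_comp.const_mul I)

def evolvingQuadric (w : ℝ × ℝ × ℝ) (p q r : C3) (y₁ y₂ : ℝ) : C3 :=
  ((((1/2 : ℝ) * (y₁^2 + y₂^2) * w.1 : ℝ) : ℂ) + y₁ * p.1 + y₂ * q.1 + r.1,
   (((1/2 : ℝ) * (y₁^2 - y₂^2) * w.2.1 : ℝ) : ℂ) + y₁ * p.2.1 - y₂ * q.2.1 + r.2.1,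
   ((y₁ * y₂ * w.2.2 : ℝ) : ℂ) + y₁ * q.2.2 + y₂ * p.2.2 + r.2.2)

def quadricTangentFst (w : ℝ × ℝ × ℝ) (p q : C3) (y₁ y₂ : ℝ) : C3 :=
  (((y₁ * w.1 : ℝ) : ℂ) + p.1, ((y₁ * w.2.1 : ℝ) : ℂ) + p.2.1, ((y₂ * w.2.2 : ℝ) : ℂ) + q.2.2)

def quadricTangentSnd (w : ℝ × ℝ × ℝ) (p q : C3) (y₁ y₂ : ℝ) : C3 :=
  (((y₂ * w.1 : ℝ) : ℂ) + q.1, -((y₂ * w.2.1 : ℝ) : ℂ) - q.2.1, ((y₁ * w.2.2 : ℝ) : ℂ) + p.2.2)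

theorem hasDerivAt_evolvingQuadric_fst (w : ℝ × ℝ × ℝ) (p q r : C3) (y₁ y₂ : ℝ) :
    HasDerivAt (fun s => evolvingQuadric w p q r s y₂) (quadricTangentFst w p q y₁ y₂) y₁ := by
  refine .prodMk
    (hasDerivAt_of_eq_quadratic (w.1 / 2) p.1 (y₂ ^ 2 * w.1 / 2 + y₂ * q.1 + r.1) ?_ ?_)
    (.prodMk (hasDerivAt_of_eq_quadratic (w.2.1 / 2) p.2.1
        (-(y₂ ^ 2 * w.2.1 / 2) - y₂ * q.2.1 + r.2.1) ?_ ?_)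
      (hasDerivAt_of_eq_quadratic 0 (y₂ * w.2.2 + q.2.2) (y₂ * p.2.2 + r.2.2) ?_ ?_))
  all_goals intros; push_cast; ring

theorem hasDerivAt_evolvingQuadric_snd (w : ℝ × ℝ × ℝ) (p q r : C3) (y₁ y₂ : ℝ) :
    HasDerivAt (fun s => evolvingQuadric w p q r y₁ s) (quadricTangentSnd w p q y₁ y₂) y₂ := by
  refine .prodMk
    (hasDerivAt_of_eq_quadratic (w.1 / 2) q.1 (y₁ ^ 2 * w.1 / 2 + y₁ * p.1 + r.1) ?_ ?_)
    (.prodMk (hasDerivAt_of_eq_quadratic (-(w.2.1 / 2)) (-q.2.1)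
        (y₁ ^ 2 * w.2.1 / 2 + y₁ * p.2.1 + r.2.1) ?_ ?_)
      (hasDerivAt_of_eq_quadratic 0 (y₁ * w.2.2 + p.2.2) (y₁ * q.2.2 + r.2.2) ?_ ?_))
  all_goals intros; push_cast; ring

theorem HasDerivAt.evolvingQuadric {w : ℝ → ℝ × ℝ × ℝ} {p q r : ℝ → C3} {w' : ℝ × ℝ × ℝ}
    {p' q' r' : C3} {t : ℝ} (hw : HasDerivAt w w' t) (hp : HasDerivAt p p' t)
    (hq : HasDerivAt q q' t) (hr : HasDerivAt r r' t) (y₁ y₂ : ℝ) :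
    HasDerivAt (fun s => evolvingQuadric (w s) (p s) (q s) (r s) y₁ y₂)
      (evolvingQuadric w' p' q' r' y₁ y₂) t := by
  refine .prodMk ?_ (.prodMk ?_ ?_)
  · exact (((hw.prod_fst.const_mul _).ofReal_comp.add (hp.prod_fst.const_mul _)).add
      (hq.prod_fst.const_mul _)).add hr.prod_fst
  · exact (((hw.prod_snd.prod_fst.const_mul _).ofReal_comp.add
      (hp.prod_snd.prod_fst.const_mul _)).sub (hq.prod_snd.prod_fst.const_mul _)).add
      hr.prod_snd.prod_fst
  · exact (((hw.prod_snd.prod_snd.const_mul _).ofReal_comp.add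
      (hq.prod_snd.prod_snd.const_mul _)).add (hp.prod_snd.prod_snd.const_mul _)).add
      hr.prod_snd.prod_snd

def quadraticFlow (w : ℝ × ℝ × ℝ) : ℝ × ℝ × ℝ :=
  (w.2.1 * w.2.2, -(w.1 * w.2.2), -(w.1 * w.2.1))

def linearFlow (w : ℝ × ℝ × ℝ) (p : C3) : C3 :=
  ((1/2 : ℂ) * conj (w.2.1 * p.2.2 + w.2.2 * p.2.1),
   -(1/2 : ℂ) * conj (w.1 * p.2.2 + w.2.2 * p.1),
   -(1/2 : ℂ) * conj (w.2.1 * p.1 + w.1 * p.2.1))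

def constantFlow (p q : C3) : C3 :=
  ((1/2 : ℂ) * (conj p.2.1 * conj p.2.2 + conj q.2.2 * conj q.2.1),
   (1/2 : ℂ) * (conj q.2.2 * conj q.1 - conj p.1 * conj p.2.2),
   -(1/2 : ℂ) * (conj p.1 * conj q.2.1 + conj p.2.1 * conj q.1))

theorem evolvingQuadric_flow (w : ℝ × ℝ × ℝ) (p q : C3) (y₁ y₂ : ℝ) :
    evolvingQuadric (quadraticFlow w) (linearFlow w p) (linearFlow w q) (constantFlow p q) y₁ y₂
      = (1/2 : ℝ) • conjCross (quadricTangentFst w p q y₁ y₂) (quadricTangentSnd w p q y₁ y₂) := by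
  simp only [evolvingQuadric, quadraticFlow, linearFlow, constantFlow, conjCross,
    quadricTangentFst, quadricTangentSnd, Prod.smul_mk, Complex.real_smul, map_add, map_sub,
    map_mul, map_neg, Complex.conj_ofReal]
  push_cast
  refine Prod.ext ?_ (Prod.ext ?_ ?_) <;> ring

theorem omega3_quadricTangentFst_quadricTangentSnd (w : ℝ × ℝ × ℝ) (p q : C3) (y₁ y₂ : ℝ) :
    omega3 (quadricTangentFst w p q y₁ y₂) (quadricTangentSnd w p q y₁ y₂)
      = y₁ * (w.1 * q.1.im - w.2.1 * q.2.1.im - w.2.2 * q.2.2.im)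
        - y₂ * (w.1 * p.1.im - w.2.1 * p.2.1.im - w.2.2 * p.2.2.im)
        + omega3 (p.1, p.2.1, q.2.2) (q.1, -q.2.1, p.2.2) := by
  simp only [omega3, quadricTangentFst, quadricTangentSnd, Complex.mul_im, Complex.conj_re,
    Complex.conj_im, Complex.add_re, Complex.add_im, Complex.sub_re, Complex.sub_im,
    Complex.neg_re, Complex.neg_im, Complex.ofReal_re, Complex.ofReal_im]
  ring

theorem hasDerivAt_fInt (t : ℝ) : HasDerivAt fInt (Real.sqrt (Real.cosh t)) t := by
  have hcont : Continuous fun s => Real.sqrt (Real.cosh s) := by fun_prop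
  exact intervalIntegral.integral_hasDerivAt_right (hcont.intervalIntegrable _ _)
    (hcont.stronglyMeasurableAtFilter _ _) hcont.continuousAt

theorem Real.hasDerivAt_tanh (t : ℝ) :
    HasDerivAt Real.tanh ((Real.cosh t)⁻¹ * (Real.cosh t)⁻¹) t := by
  rw [funext Real.tanh_eq_sinh_div_cosh]
  refine ((Real.hasDerivAt_sinh t).div (Real.hasDerivAt_cosh t) (Real.cosh_pos t).ne').congr_deriv ?_
  field_simp
  linear_combination Real.cosh_sq_sub_sinh_sq t

theorem Real.hasDerivAt_inv_cosh (t : ℝ) :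
    HasDerivAt (fun s => (Real.cosh s)⁻¹) (-(Real.tanh t * (Real.cosh t)⁻¹)) t := by
  refine ((Real.hasDerivAt_cosh t).inv (Real.cosh_pos t).ne').congr_deriv ?_
  rw [Real.tanh_eq_sinh_div_cosh]
  field_simp

theorem Real.hasDerivAt_sqrt_cosh (t : ℝ) :
    HasDerivAt (fun s => Real.sqrt (Real.cosh s))
      (Real.sinh t / (2 * Real.sqrt (Real.cosh t))) t :=
  ((Real.hasDerivAt_sqrt (Real.cosh_pos t).ne').comp t (Real.hasDerivAt_cosh t)).congr_deriv
    (by ring)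

def tanhSech (t : ℝ) : ℝ × ℝ × ℝ := (Real.tanh t, (Real.cosh t)⁻¹, (Real.cosh t)⁻¹)

theorem hasDerivAt_tanhSech (t : ℝ) : HasDerivAt tanhSech (quadraticFlow (tanhSech t)) t := by
  refine (Real.hasDerivAt_tanh t).prodMk
    ((Real.hasDerivAt_inv_cosh t).prodMk (Real.hasDerivAt_inv_cosh t)) |>.congr_deriv ?_
  simp [quadraticFlow, tanhSech]

def solCurve (B C E F t : ℝ) : C3 := (sol1 B E t, sol2 B C E F t, sol3 B C E F t)

theorem hasDerivAt_sol1 (B C E F t : ℝ) :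
    HasDerivAt (sol1 B E) (linearFlow (tanhSech t) (solCurve B C E F t)).1 t := by
  have hg : 0 < Real.sqrt (Real.cosh t) := Real.sqrt_pos.2 (Real.cosh_pos t)
  have hgc : Real.sqrt (Real.cosh t) ^ 2 = Real.cosh t := Real.sq_sqrt (Real.cosh_pos t).le
  refine HasDerivAt.ofReal_add_I_mul_ofReal
    ((((hasDerivAt_fInt t).mul (Real.hasDerivAt_tanh t)).sub
      ((Real.hasDerivAt_sqrt_cosh t).const_mul 2)).const_mul B)
    ((hasDerivAt_const t E).div (Real.hasDerivAt_sqrt_cosh t) hg.ne') |>.congr_deriv ?_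
  apply Complex.ext <;>
  simp only [linearFlow, tanhSech, solCurve, sol1, sol2, sol3, Real.tanh_eq_sinh_div_cosh,
    map_add, map_mul, Complex.conj_ofReal, Complex.conj_I, Complex.add_re, Complex.add_im,
    Complex.mul_re, Complex.mul_im, Complex.neg_re, Complex.neg_im, Complex.I_re, Complex.I_im,
    Complex.ofReal_re, Complex.ofReal_im, Complex.div_ofNat_re, Complex.div_ofNat_im,
    Complex.one_re, Complex.one_im, mul_zero, zero_mul, add_zero, zero_add, sub_zero, zero_sub,
    neg_zero] <;>
  set g := Real.sqrt (Real.cosh t) <;>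
  rw [← hgc] <;>
  field_simp <;>
  ring

theorem hasDerivAt_sol2 (B C E F t : ℝ) :
    HasDerivAt (sol2 B C E F) (linearFlow (tanhSech t) (solCurve B C E F t)).2.1 t := by
  have hc := Real.cosh_pos t
  have hg : 0 < Real.sqrt (Real.cosh t) := Real.sqrt_pos.2 hc
  have hgc : Real.sqrt (Real.cosh t) ^ 2 = Real.cosh t := Real.sq_sqrt hc.le
  have hs := Real.cosh_sq_sub_sinh_sq t
  refine HasDerivAt.ofReal_add_I_mul_ofReal
    ((((hasDerivAt_fInt t).const_mul B).div (Real.hasDerivAt_cosh t) hc.ne').add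
      ((Real.hasDerivAt_sqrt_cosh t).const_mul C))
    ((((Real.hasDerivAt_sinh t).const_mul E).div ((Real.hasDerivAt_sqrt_cosh t).const_mul 2)
      (by positivity)).add ((hasDerivAt_const t F).div (Real.hasDerivAt_sqrt_cosh t) hg.ne'))
    |>.congr_deriv ?_
  apply Complex.ext <;>
  simp only [linearFlow, tanhSech, solCurve, sol1, sol2, sol3, Real.tanh_eq_sinh_div_cosh,
    map_add, map_mul, Complex.conj_ofReal, Complex.conj_I, Complex.add_re, Complex.add_im,
    Complex.mul_re, Complex.mul_im, Complex.neg_re, Complex.neg_im, Complex.I_re, Complex.I_im,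
    Complex.ofReal_re, Complex.ofReal_im, Complex.div_ofNat_re, Complex.div_ofNat_im,
    Complex.one_re, Complex.one_im, mul_zero, zero_mul, add_zero, zero_add, sub_zero, zero_sub,
    neg_zero] <;>
  set g := Real.sqrt (Real.cosh t) <;>
  rw [← hgc] at hs ⊢ <;>
  field_simp
  · ring
  · linear_combination (2 * g * E) * hs

theorem sol3_eq_sol2 (B C E F : ℝ) : sol3 B C E F = sol2 B (-C) E (-F) := by
  funext t
  simp only [sol2, sol3]
  push_cast
  ring

theorem hasDerivAt_sol3 (B C E F t : ℝ) :
    HasDerivAt (sol3 B C E F) (linearFlow (tanhSech t) (solCurve B C E F t)).2.2 t := by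
  rw [sol3_eq_sol2]
  refine (hasDerivAt_sol2 B (-C) E (-F) t).congr_deriv ?_
  simp only [linearFlow, solCurve, tanhSech, sol3_eq_sol2, neg_neg]
  rw [add_comm]

theorem hasDerivAt_solCurve (B C E F t : ℝ) :
    HasDerivAt (solCurve B C E F) (linearFlow (tanhSech t) (solCurve B C E F t)) t :=
  (hasDerivAt_sol1 B C E F t).prodMk
    ((hasDerivAt_sol2 B C E F t).prodMk (hasDerivAt_sol3 B C E F t))

theorem tanhSech_im_solCurve (B C E F t : ℝ) :
    (tanhSech t).1 * (solCurve B C E F t).1.im - (tanhSech t).2.1 * (solCurve B C E F t).2.1.im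
      - (tanhSech t).2.2 * (solCurve B C E F t).2.2.im = 0 := by
  have hg : 0 < Real.sqrt (Real.cosh t) := Real.sqrt_pos.2 (Real.cosh_pos t)
  simp only [tanhSech, solCurve, sol1, sol2, sol3, Real.tanh_eq_sinh_div_cosh, Complex.add_im,
    Complex.mul_im, Complex.I_re, Complex.I_im, Complex.ofReal_re, Complex.ofReal_im]
  field_simp
  ring

theorem omega3_solCurve_solCurve {B C E F B' C' E' F' : ℝ}
    (hconstr : B * E' + C * F' = B' * E + C' * F) (t : ℝ) :
    omega3 ((solCurve B C E F t).1, (solCurve B C E F t).2.1, (solCurve B' C' E' F' t).2.2)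
      ((solCurve B' C' E' F' t).1, -(solCurve B' C' E' F' t).2.1, (solCurve B C E F t).2.2)
      = 0 := by
  have hg : 0 < Real.sqrt (Real.cosh t) := Real.sqrt_pos.2 (Real.cosh_pos t)
  have hgc : Real.sqrt (Real.cosh t) ^ 2 = Real.cosh t := Real.sq_sqrt (Real.cosh_pos t).le
  simp only [omega3, solCurve, sol1, sol2, sol3, Real.tanh_eq_sinh_div_cosh, Complex.add_im,
    Complex.add_re, Complex.mul_im, Complex.mul_re, Complex.I_re, Complex.I_im, Complex.ofReal_re,
    Complex.ofReal_im, Complex.conj_re, Complex.conj_im, Complex.neg_re, Complex.neg_im]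
  set g := Real.sqrt (Real.cosh t)
  rw [← hgc]
  field_simp
  linear_combination (-8 * g ^ 3) * hconstr

theorem statement_14_general
    (B C E F B' C' E' F' : ℝ)
    (hconstr : B * E' + C * F' = B' * E + C' * F)
    (r₁ r₂ r₃ : ℝ → ℂ)
    (hr1 : ∀ t : ℝ, HasDerivAt r₁
      ((1/2 : ℂ) * (conj (sol2 B C E F t) * conj (sol3 B C E F t)
        + conj (sol3 B' C' E' F' t) * conj (sol2 B' C' E' F' t))) t)
    (hr2 : ∀ t : ℝ, HasDerivAt r₂
      ((1/2 : ℂ) * (conj (sol3 B' C' E' F' t) * conj (sol1 B' E' t)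
        - conj (sol1 B E t) * conj (sol3 B C E F t))) t)
    (hr3 : ∀ t : ℝ, HasDerivAt r₃
      (-(1/2 : ℂ) * (conj (sol1 B E t) * conj (sol2 B' C' E' F' t)
        + conj (sol2 B C E F t) * conj (sol1 B' E' t))) t)
    (Φ : ℝ → ℝ → ℝ → C3)
    (hΦ : ∀ y₁ y₂ t : ℝ, Φ y₁ y₂ t =
      (((((1/2 : ℝ) * (y₁^2 + y₂^2) * Real.tanh t : ℝ)) : ℂ)
         + y₁ * sol1 B E t + y₂ * sol1 B' E' t + r₁ t,
       ((((1/2 : ℝ) * (y₁^2 - y₂^2) * (Real.cosh t)⁻¹ : ℝ)) : ℂ)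
         + y₁ * sol2 B C E F t - y₂ * sol2 B' C' E' F' t + r₂ t,
       (((y₁ * y₂ * (Real.cosh t)⁻¹ : ℝ)) : ℂ)
         + y₁ * sol3 B' C' E' F' t + y₂ * sol3 B C E F t + r₃ t)) :
    ∀ y₁ y₂ t : ℝ,
      omega3 (deriv (fun s => Φ s y₂ t) y₁) (deriv (fun s => Φ y₁ s t) y₂) = 0 ∧
      omega3 (deriv (fun s => Φ s y₂ t) y₁) (deriv (fun s => Φ y₁ y₂ s) t) = 0 ∧
      omega3 (deriv (fun s => Φ y₁ s t) y₂) (deriv (fun s => Φ y₁ y₂ s) t) = 0 ∧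
      (Omega3 (deriv (fun s => Φ s y₂ t) y₁) (deriv (fun s => Φ y₁ s t) y₂)
        (deriv (fun s => Φ y₁ y₂ s) t)).im = 0 := by
  intro y₁ y₂ t
  set p := solCurve B C E F
  set q := solCurve B' C' E' F'
  set r : ℝ → C3 := fun s => (r₁ s, r₂ s, r₃ s)
  obtain rfl : Φ = fun y₁ y₂ t => evolvingQuadric (tanhSech t) (p t) (q t) (r t) y₁ y₂ :=
    funext fun y₁ => funext fun y₂ => funext (hΦ y₁ y₂)
  have hr : HasDerivAt r (constantFlow (p t) (q t)) t := (hr1 t).prodMk ((hr2 t).prodMk (hr3 t))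
  rw [(hasDerivAt_evolvingQuadric_fst _ _ _ _ y₁ y₂).deriv,
    (hasDerivAt_evolvingQuadric_snd _ _ _ _ y₁ y₂).deriv,
    ((hasDerivAt_tanhSech t).evolvingQuadric (hasDerivAt_solCurve B C E F t)
      (hasDerivAt_solCurve B' C' E' F' t) hr y₁ y₂).deriv, evolvingQuadric_flow]
  refine ⟨?_, omega3_smul_conjCross_left _ _ _, omega3_smul_conjCross_right _ _ _,
    im_Omega3_smul_conjCross _ _ _⟩
  rw [omega3_quadricTangentFst_quadricTangentSnd, tanhSech_im_solCurve, tanhSech_im_solCurve,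
    omega3_solCurve_solCurve hconstr]
  ring

theorem statement_14
    (B C E F B' C' E' F' : ℝ)
    (hconstr : B * E' + C * F' = B' * E + C' * F)
    (r₁ r₂ r₃ : ℝ → ℂ)
    (hr0 : r₁ 0 = 0 ∧ r₂ 0 = 0 ∧ r₃ 0 = 0)
    (hr1 : ∀ t : ℝ, HasDerivAt r₁
      ((1/2 : ℂ) * (conj (sol2 B C E F t) * conj (sol3 B C E F t)
        + conj (sol3 B' C' E' F' t) * conj (sol2 B' C' E' F' t))) t)
    (hr2 : ∀ t : ℝ, HasDerivAt r₂
      ((1/2 : ℂ) * (conj (sol3 B' C' E' F' t) * conj (sol1 B' E' t)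
        - conj (sol1 B E t) * conj (sol3 B C E F t))) t)
    (hr3 : ∀ t : ℝ, HasDerivAt r₃
      (-(1/2 : ℂ) * (conj (sol1 B E t) * conj (sol2 B' C' E' F' t)
        + conj (sol2 B C E F t) * conj (sol1 B' E' t))) t)
    (Φ : ℝ → ℝ → ℝ → C3)
    (hΦ : ∀ y₁ y₂ t : ℝ, Φ y₁ y₂ t =
      (((((1/2 : ℝ) * (y₁^2 + y₂^2) * Real.tanh t : ℝ)) : ℂ)
         + y₁ * sol1 B E t + y₂ * sol1 B' E' t + r₁ t,
       ((((1/2 : ℝ) * (y₁^2 - y₂^2) * (Real.cosh t)⁻¹ : ℝ)) : ℂ)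
         + y₁ * sol2 B C E F t - y₂ * sol2 B' C' E' F' t + r₂ t,
       (((y₁ * y₂ * (Real.cosh t)⁻¹ : ℝ)) : ℂ)
         + y₁ * sol3 B' C' E' F' t + y₂ * sol3 B C E F t + r₃ t)) :
    ∀ y₁ y₂ t : ℝ,
      omega3 (deriv (fun s => Φ s y₂ t) y₁) (deriv (fun s => Φ y₁ s t) y₂) = 0 ∧
      omega3 (deriv (fun s => Φ s y₂ t) y₁) (deriv (fun s => Φ y₁ y₂ s) t) = 0 ∧
      omega3 (deriv (fun s => Φ y₁ s t) y₂) (deriv (fun s => Φ y₁ y₂ s) t) = 0 ∧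
      (Omega3 (deriv (fun s => Φ s y₂ t) y₁) (deriv (fun s => Φ y₁ s t) y₂)
        (deriv (fun s => Φ y₁ y₂ s) t)).im = 0 :=
  statement_14_general B C E F B' C' E' F' hconstr r₁ r₂ r₃ hr1 hr2 hr3 Φ hΦ
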